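/- Let X be a finite connected graph of genus g and let G be a finite group acting on X freely on the set of darts and without invertible edges. Let g(X/G) = 1 − #(G-orbits on V(X)) + #(G-orbits on E(X)) be the genus of the factor graph X/G. Then g − 1 = |G|·(g(X/G) − 1) + Σ_{v ∈ V(X)} (|G^v| − 1). -/

import Mathlib

/-!
Since `g - 1 = |E| - |V|`, the formula follows from two orbit counts. Burnside's double counting
gives `∑ v, |G^v| = |G| · #(V/G)`. On edges the action is free: an element fixing `{x, x̄}` either
fixes the dart `x` or inverts the edge. Hence `|E| = |G| · #(E/G)`.
-/

open MulAction

namespace MulAction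

variable {G α : Type*} [Group G] [MulAction G α]

noncomputable def sigmaStabilizerEquivOrbitsProdGroup :
    (Σ a : α, stabilizer G a) ≃ orbitRel.Quotient G α × G :=
  (Equiv.subtypeProdEquivSigmaSubtype fun (a : α) (g : G) => g ∈ stabilizer G a).symm
    |>.trans ((Equiv.prodComm α G).subtypeEquiv fun _ => Iff.rfl)
    |>.trans (Equiv.subtypeProdEquivSigmaSubtype fun (g : G) (a : α) => g • a = a)
    |>.trans (sigmaFixedByEquivOrbitsProdGroup G α)

theorem sum_card_stabilizer_eq_card_orbits_mul_card_group [Fintype α] [Finite G] :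
    ∑ a : α, Nat.card (stabilizer G a) = Nat.card (orbitRel.Quotient G α) * Nat.card G := by
  rw [← Nat.card_sigma, ← Nat.card_prod, Nat.card_congr sigmaStabilizerEquivOrbitsProdGroup]

theorem card_eq_card_orbits_mul_card_group_of_free
    (hfree : ∀ (g : G) (a : α), g • a = a → g = 1) :
    Nat.card α = Nat.card (orbitRel.Quotient G α) * Nat.card G := by
  have (a : α) : Unique (stabilizer G a) :=
    ⟨⟨1⟩, fun g => Subtype.ext (hfree g a g.2)⟩
  rw [← Nat.card_prod, ← Nat.card_congr sigmaStabilizerEquivOrbitsProdGroup,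
    Nat.card_congr (Equiv.sigmaUnique α _)]

theorem card_setOf_eq_orbit :
    Nat.card {s : Set α | ∃ a : α, s = orbit G a} = Nat.card (orbitRel.Quotient G α) := by
  have : {s : Set α | ∃ a : α, s = orbit G a}
      = Set.range (orbitRel.Quotient.orbit (G := G)) := by
    ext s
    simp only [Set.mem_ofPred_eq, Set.mem_range, Quotient.exists, orbitRel.Quotient.orbit_mk,
      eq_comm]
  rw [this, Nat.card_range_of_injective orbitRel.Quotient.orbit_injective]

end MulAction

namespace SubMulAction

variable {G α : Type*} [Group G] [MulAction G α]

theorem card_setOf_eq_orbit (p : SubMulAction G α) :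
    Nat.card {s : Set α | ∃ a ∈ p, s = orbit G a} = Nat.card (orbitRel.Quotient G p) := by
  have hinj : Function.Injective fun q : orbitRel.Quotient G p => Subtype.val '' q.orbit :=
    (Set.image_injective.mpr Subtype.val_injective).comp orbitRel.Quotient.orbit_injective
  have : {s : Set α | ∃ a ∈ p, s = orbit G a}
      = Set.range fun q : orbitRel.Quotient G p => Subtype.val '' q.orbit := by
    ext s
    simp only [Set.mem_ofPred_eq, Set.mem_range, Quotient.exists, orbitRel.Quotient.orbit_mk]
    simp [Subtype.exists, val_image_orbit, eq_comm]
  rw [this, Nat.card_range_of_injective hinj]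

end SubMulAction

namespace Sym2

variable {G α : Type*} [Group G] [MulAction G α]

instance : MulAction G (Sym2 α) where
  smul g := Sym2.map (g • ·)
  one_smul e := by
    change Sym2.map _ e = e
    simp only [one_smul, Sym2.map_id', id]
  mul_smul g h e := by
    change Sym2.map _ e = Sym2.map _ (Sym2.map _ e)
    simp only [Sym2.map_map, Function.comp_def, mul_smul]

theorem smul_mk (g : G) (x y : α) : g • s(x, y) = s(g • x, g • y) := rfl

end Sym2

section DartGraph

variable {G D : Type*} [Group G] [MulAction G D] {bar : D → D}

def edgeSubMulAction (hbar_equiv : ∀ (g : G) (x : D), bar (g • x) = g • bar x) :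
    SubMulAction G (Sym2 D) where
  carrier := {e | ∃ x, e = s(x, bar x)}
  smul_mem' := by
    rintro g _ ⟨x, rfl⟩
    exact ⟨g • x, by rw [Sym2.smul_mk, hbar_equiv]⟩

theorem eq_one_of_smul_edge_eq_self
    (hbar_equiv : ∀ (g : G) (x : D), bar (g • x) = g • bar x)
    (hfree : ∀ (g : G) (x : D), g • x = x → g = 1)
    (hnoinv : ∀ (x : D) (g : G), g • x ≠ bar x) (g : G) (e : edgeSubMulAction hbar_equiv)
    (h : g • e = e) : g = 1 := by
  obtain ⟨_, x, rfl⟩ := e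
  have h : s(g • x, g • bar x) = s(x, bar x) := congrArg Subtype.val h
  rcases Sym2.eq_iff.mp h with ⟨hx, -⟩ | ⟨hx, -⟩
  · exact hfree g x hx
  · exact absurd hx (hnoinv x g)

end DartGraph

theorem riemann_hurwitz_free_action_no_invertible_edges_general
    {V D G : Type} [Fintype V]
    [Group G] [Fintype G] [MulAction G D] [MulAction G V]
    (bar : D → D)
    (hbar_equiv : ∀ (g : G) (x : D), bar (g • x) = g • bar x)
    (E : Set (Sym2 D)) (hE : E = {e : Sym2 D | ∃ x : D, e = Sym2.mk x (bar x)})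
    (hfree : ∀ (g : G) (x : D), g • x = x → g = 1)
    (hnoinv : ∀ (x : D) (g : G), g • x ≠ bar x)
    (g gQ : ℤ)
    (hg : g = 1 - (Nat.card V : ℤ) + (Nat.card E : ℤ))
    (hgQ : gQ = 1 - (Nat.card {s : Set V | ∃ v : V, s = MulAction.orbit G v} : ℤ) + (Nat.card {s : Set (Sym2 D) | ∃ e ∈ E, s = {e' : Sym2 D | ∃ g : G, Sym2.map (fun y => g • y) e = e'}} : ℤ)) :
    g - 1 = (Nat.card G : ℤ) * (gQ - 1)
      + (∑ᶠ v : V, ((Nat.card (MulAction.stabilizer G v) : ℤ) - 1)) := by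
  subst hg hgQ hE
  have hV : ∑ v : V, (Nat.card (stabilizer G v) : ℤ)
      = Nat.card (orbitRel.Quotient G V) * Nat.card G :=
    mod_cast sum_card_stabilizer_eq_card_orbits_mul_card_group
  have hEdges := card_eq_card_orbits_mul_card_group_of_free (α := edgeSubMulAction hbar_equiv)
    (eq_one_of_smul_edge_eq_self hbar_equiv hfree hnoinv)
  -- `E` and its orbit sets are those of `edgeSubMulAction` only up to unfolding `•` on `Sym2`.
  erw [card_setOf_eq_orbit, SubMulAction.card_setOf_eq_orbit (edgeSubMulAction hbar_equiv), hEdges]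
  rw [finsum_eq_sum_of_fintype, Finset.sum_sub_distrib, hV]
  simp only [Finset.sum_const, Finset.card_univ, Nat.card_eq_fintype_card]
  push_cast
  ring

/-- A finite graph `X = (D, V; I, bar)`: `D` the darts, `V` the vertices,
`I` the incidence function, `bar` the fixed-point-free dart-reversing involution.
A finite group `G` acts on `X` via automorphisms (equivariantly and faithfully).
The edge set `E` consists of the unordered pairs `{x, bar x}`. -/
theorem riemann_hurwitz_free_action_no_invertible_edges
    {V D G : Type} [Fintype V] [Fintype D] [Nonempty V]
    [Group G] [Fintype G] [MulAction G D] [MulAction G V]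
    (I : D → V) (bar : D → D)
    (hbar_invol : ∀ x : D, bar (bar x) = x)
    (hbar_nofix : ∀ x : D, bar x ≠ x)
    (hI_equiv : ∀ (g : G) (x : D), I (g • x) = g • I x)
    (hbar_equiv : ∀ (g : G) (x : D), bar (g • x) = g • bar x)
    (hfaithful : ∀ g : G, (∀ x : D, g • x = x) → (∀ v : V, g • v = v) → g = 1)
    (E : Set (Sym2 D)) (hE : E = {e : Sym2 D | ∃ x : D, e = Sym2.mk x (bar x)})
    (hconn : ∀ u v : V, Relation.ReflTransGen
      (fun a b : V => ∃ x : D, I x = a ∧ I (bar x) = b) u v)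
    (hfree : ∀ (g : G) (x : D), g • x = x → g = 1)
    (hnoinv : ∀ (x : D) (g : G), g • x ≠ bar x)
    (g gQ : ℤ)
    (hg : g = 1 - (Nat.card V : ℤ) + (Nat.card E : ℤ))
    (hgQ : gQ = 1 - (Nat.card {s : Set V | ∃ v : V, s = MulAction.orbit G v} : ℤ) + (Nat.card {s : Set (Sym2 D) | ∃ e ∈ E, s = {e' : Sym2 D | ∃ g : G, Sym2.map (fun y => g • y) e = e'}} : ℤ)) :
    g - 1 = (Nat.card G : ℤ) * (gQ - 1)
      + (∑ᶠ v : V, ((Nat.card (MulAction.stabilizer G v) : ℤ) - 1)) :=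
  riemann_hurwitz_free_action_no_invertible_edges_general bar hbar_equiv E hE hfree hnoinv g gQ hg
    hgQ
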